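/- arXiv:2211.04958 — 3 statements merged into one kernel-verified Lean document; each statement's English description precedes it below -/
import Mathlib

section
/- Let Y be a nonnegative random variable whose tail satisfies P(Y ≥ t) ≤ a·exp(−t^α) for all t > 0, where a > 0 and α > 1. Then for any w ≥ 1, E[Y·1{Y ≥ w}] ≤ 2a·w·exp(−w^α). -/
/-!
On `{Y ≥ w}` write `Y = w + (Y - w)⁺`. The first term contributes `w · P(Y ≥ w) ≤ a w e^{-w^α}`.
For the excess, the layer-cake formula and `(w + t)^α ≥ w^α + t` (valid for `w ≥ 1`, `α ≥ 1`) give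
`E[(Y - w)⁺] ≤ ∫₀^∞ a e^{-(w+t)^α} dt ≤ a e^{-w^α} ∫₀^∞ e^{-t} dt = a e^{-w^α} ≤ a w e^{-w^α}`.
-/

open MeasureTheory Real Set

theorem Real.rpow_add_le_add_rpow_of_one_le {w t α : ℝ} (hw : 1 ≤ w) (ht : 0 ≤ t) (hα : 1 ≤ α) :
    w ^ α + t ≤ (w + t) ^ α := by
  have hw0 : 0 < w := one_pos.trans_le hw
  have hwt : 0 < w + t := by linarith
  calc w ^ α + t ≤ w ^ α + w ^ (α - 1) * t := by
        gcongr
        exact le_mul_of_one_le_left ht (one_le_rpow hw (by linarith))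
    _ = w ^ (α - 1) * (w + t) := by
        rw [rpow_sub_one hw0.ne']
        field_simp
    _ ≤ (w + t) ^ (α - 1) * (w + t) := by
        gcongr
        linarith
    _ = (w + t) ^ α := by
        rw [rpow_sub_one hwt.ne']
        field_simp

section

variable {Ω : Type*} [MeasurableSpace Ω] {μ : Measure Ω}

theorem integral_le_setIntegral_Ioi_of_measureReal_lt_le {g : Ω → ℝ} {f : ℝ → ℝ}
    (hg : Integrable g μ) (hg_nn : 0 ≤ᵐ[μ] g) (hf : IntegrableOn f (Ioi 0))
    (htail : ∀ t, 0 < t → μ.real {ω | t < g ω} ≤ f t) :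
    ∫ ω, g ω ∂μ ≤ ∫ t in Ioi 0, f t := by
  rw [hg.integral_eq_integral_meas_lt hg_nn]
  exact integral_mono_of_nonneg (.of_forall fun _ => measureReal_nonneg) hf
    (ae_restrict_of_forall_mem measurableSet_Ioi htail)

theorem setIntegral_le_mul_measureReal_add_integral_max_sub [IsFiniteMeasure μ] {Y : Ω → ℝ}
    (hY : Measurable Y) (hInt : Integrable Y μ) (w : ℝ) :
    ∫ ω in {ω | w ≤ Y ω}, Y ω ∂μ ≤ w * μ.real {ω | w ≤ Y ω} + ∫ ω, max (Y ω - w) 0 ∂μ := by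
  have hS : MeasurableSet {ω | w ≤ Y ω} := measurableSet_le measurable_const hY
  have hexcess : Integrable (fun ω => max (Y ω - w) 0) μ := (hInt.sub (integrable_const w)).pos_part
  calc ∫ ω in {ω | w ≤ Y ω}, Y ω ∂μ = ∫ ω in {ω | w ≤ Y ω}, (w + max (Y ω - w) 0) ∂μ := by
        refine setIntegral_congr_fun hS fun ω (hω : w ≤ Y ω) => ?_
        rw [max_eq_left (sub_nonneg.mpr hω)]
        ring
    _ = w * μ.real {ω | w ≤ Y ω} + ∫ ω in {ω | w ≤ Y ω}, max (Y ω - w) 0 ∂μ := by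
        rw [integral_add (integrable_const w) hexcess.integrableOn, setIntegral_const,
          smul_eq_mul, mul_comm]
    _ ≤ w * μ.real {ω | w ≤ Y ω} + ∫ ω, max (Y ω - w) 0 ∂μ := by
        have hexcess_nn : 0 ≤ᵐ[μ] fun ω => max (Y ω - w) 0 := .of_forall fun _ => le_max_right _ _
        exact add_le_add_right (setIntegral_le_integral hexcess hexcess_nn) _

theorem integral_max_sub_le_of_tail_le_exp_neg_rpow [IsFiniteMeasure μ] {Y : Ω → ℝ}
    (hInt : Integrable Y μ) {a α : ℝ} (ha : 0 ≤ a) (hα : 1 ≤ α)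
    (htail : ∀ t : ℝ, 0 < t → μ {ω | t ≤ Y ω} ≤ ENNReal.ofReal (a * exp (-(t ^ α))))
    {w : ℝ} (hw : 1 ≤ w) :
    ∫ ω, max (Y ω - w) 0 ∂μ ≤ a * exp (-(w ^ α)) := by
  set C := a * exp (-(w ^ α))
  have hexcess_tail : ∀ t, 0 < t → μ.real {ω | t < max (Y ω - w) 0} ≤ C * exp (-t) := by
    intro t ht
    have hsub : {ω | t < max (Y ω - w) 0} ⊆ {ω | w + t ≤ Y ω} := 
      fun ω (hω : t < max (Y ω - w) 0) => show w + t ≤ Y ω by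
        rcases lt_max_iff.mp hω with h | h <;> linarith
    calc μ.real {ω | t < max (Y ω - w) 0} ≤ μ.real {ω | w + t ≤ Y ω} :=
          measureReal_mono hsub ((htail _ (by linarith)).trans_lt ENNReal.ofReal_lt_top).ne
      _ ≤ a * exp (-((w + t) ^ α)) :=
          ENNReal.toReal_le_of_le_ofReal (by positivity) (htail _ (by linarith))
      _ ≤ C * exp (-t) := by
          rw [mul_assoc, ← exp_add]
          gcongr
          linarith [rpow_add_le_add_rpow_of_one_le hw ht.le hα]
  calc ∫ ω, max (Y ω - w) 0 ∂μ ≤ ∫ t in Ioi 0, C * exp (-t) :=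
        integral_le_setIntegral_Ioi_of_measureReal_lt_le
          (hInt.sub (integrable_const w)).pos_part (.of_forall fun _ => le_max_right _ _)
          ((exp_neg_integrableOn_Ioi 0 one_pos).const_mul C |>.congr (by simp)) hexcess_tail
    _ = C := by rw [integral_const_mul, integral_exp_neg_Ioi_zero, mul_one]

end

theorem stmt1_general {Ω : Type*} [MeasurableSpace Ω] (μ : Measure Ω) [IsProbabilityMeasure μ]
    (Y : Ω → ℝ) (hY : Measurable Y) (hInt : Integrable Y μ)
    (a α : ℝ) (ha : 0 < a) (hα : 1 < α)
    (htail : ∀ t : ℝ, 0 < t → μ {ω | t ≤ Y ω} ≤ ENNReal.ofReal (a * Real.exp (-(t ^ α))))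
    (w : ℝ) (hw : 1 ≤ w) :
    ∫ ω in {ω | w ≤ Y ω}, Y ω ∂μ ≤ 2 * a * w * Real.exp (-(w ^ α)) := by
  have hC : 0 ≤ a * exp (-(w ^ α)) := by positivity
  calc ∫ ω in {ω | w ≤ Y ω}, Y ω ∂μ
      ≤ w * μ.real {ω | w ≤ Y ω} + ∫ ω, max (Y ω - w) 0 ∂μ :=
        setIntegral_le_mul_measureReal_add_integral_max_sub hY hInt w
    _ ≤ w * (a * exp (-(w ^ α))) + a * exp (-(w ^ α)) := by
        gcongr
        · exact ENNReal.toReal_le_of_le_ofReal hC (htail w (by linarith))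
        · exact integral_max_sub_le_of_tail_le_exp_neg_rpow hInt ha.le hα.le htail hw
    _ ≤ 2 * a * w * exp (-(w ^ α)) := by nlinarith

theorem stmt1 {Ω : Type*} [MeasurableSpace Ω] (μ : Measure Ω) [IsProbabilityMeasure μ]
    (Y : Ω → ℝ) (hY : Measurable Y) (hYnn : ∀ ω, 0 ≤ Y ω) (hInt : Integrable Y μ)
    (a α : ℝ) (ha : 0 < a) (hα : 1 < α)
    (htail : ∀ t : ℝ, 0 < t → μ {ω | t ≤ Y ω} ≤ ENNReal.ofReal (a * Real.exp (-(t ^ α))))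
    (w : ℝ) (hw : 1 ≤ w) :
    ∫ ω in {ω | w ≤ Y ω}, Y ω ∂μ ≤ 2 * a * w * Real.exp (-(w ^ α)) :=
  stmt1_general μ Y hY hInt a α ha hα htail w hw
end

section
/- Let f and g be measurable functions of (X₁,...,X_n, X₁′,...,X_n′) where the X_i′ are independent copies of the X_i, all mutually independent. Suppose for some index j: E[g | all variables except X_j] = 0 (i.e., E_{X_j} g = 0), and f does not depend on X_j′. Then E[f·g] = E[(∇_j f)·g], where ∇_j f = f − f^j and f^j is obtained from f by replacing X_j with X_j′. -/
open MeasureTheory Real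

/-! The replaced function `f (update x j (x' j), x')` does not depend on `x j`, so integrating
out `x j` first turns `E[f^j g]` into `E[f^j E_{X_j} g] = 0`; hence `E[f g] = E[(f - f^j) g]`. -/

section IntegralUpdate

variable {E G : Type*} [MeasurableSpace E] [NormedAddCommGroup G] [NormedSpace ℝ G] {n : ℕ}
  (ν : Fin n → Measure E) [∀ i, SigmaFinite (ν i)] (j : Fin n)

theorem integral_pi_eq_zero_of_integral_update_eq_zero {F : (Fin n → E) → G}
    (hF : Integrable F (Measure.pi ν)) (h : ∀ x, ∫ v, F (Function.update x j v) ∂ν j = 0) :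
    ∫ x, F x ∂Measure.pi ν = 0 := by
  rcases n with _ | m
  · exact j.elim0
  have he := (measurePreserving_piFinSuccAbove ν j).symm
  have hFe := (he.integrable_comp_emb (MeasurableEquiv.measurableEmbedding _)).mpr hF
  rw [← he.integral_comp']
  refine (integral_prod_symm _ hFe).trans (integral_eq_zero_of_ae (ae_of_all _ fun y => ?_))
  rcases isEmpty_or_nonempty E with _ | ⟨⟨a⟩⟩
  · exact integral_of_isEmpty
  · simpa [Fin.update_insertNth, Fin.insertNthEquiv] using h (j.insertNth a y)

theorem integral_prod_eq_zero_of_integral_update_eq_zero {Y : Type*} [MeasurableSpace Y]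
    {μ : Measure Y} [SFinite μ] {F : (Fin n → E) × Y → G}
    (hF : Integrable F ((Measure.pi ν).prod μ))
    (h : ∀ x y, ∫ v, F (Function.update x j v, y) ∂ν j = 0) :
    ∫ p, F p ∂(Measure.pi ν).prod μ = 0 := by
  rw [integral_prod_symm _ hF]
  refine integral_eq_zero_of_ae ?_
  filter_upwards [hF.prod_left_ae] with y hy
  exact integral_pi_eq_zero_of_integral_update_eq_zero ν j hy (h · y)

end IntegralUpdate

theorem stmt9_general {E : Type*} [MeasurableSpace E] (n : ℕ) (ν : Fin n → Measure E)
    [∀ i, IsProbabilityMeasure (ν i)] (j : Fin n)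
    (f g : (Fin n → E) × (Fin n → E) → ℝ)
    (hgj : ∀ (x x' : Fin n → E), ∫ v, g (Function.update x j v, x') ∂(ν j) = 0)
    (hint1 : Integrable (fun p => f p * g p) ((Measure.pi ν).prod (Measure.pi ν)))
    (hint2 : Integrable (fun p => f (Function.update p.1 j (p.2 j), p.2) * g p)
      ((Measure.pi ν).prod (Measure.pi ν))) :
    ∫ p, f p * g p ∂((Measure.pi ν).prod (Measure.pi ν)) =
      ∫ p, (f p - f (Function.update p.1 j (p.2 j), p.2)) * g p
        ∂((Measure.pi ν).prod (Measure.pi ν)) := by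
  have hreplaced : ∫ p, f (Function.update p.1 j (p.2 j), p.2) * g p
      ∂((Measure.pi ν).prod (Measure.pi ν)) = 0 := by
    refine integral_prod_eq_zero_of_integral_update_eq_zero ν j hint2 fun x x' => ?_
    simp only [Function.update_idem]
    rw [integral_const_mul, hgj, mul_zero]
  simp only [sub_mul]
  rw [integral_sub hint1 hint2, hreplaced, sub_zero]

/-- Properties of the replace-one difference operator: if `E_{X_j} g = 0` and `f` does not
depend on the copy `X_j'`, then `E[f g] = E[(∇_j f) g]`. The underlying probability space
is the product of the laws of `(X₁,...,Xₙ)` and of the independent copies `(X₁',...,Xₙ')`. -/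
theorem stmt9 {E : Type*} [MeasurableSpace E] (n : ℕ) (ν : Fin n → Measure E)
    [∀ i, IsProbabilityMeasure (ν i)] (j : Fin n)
    (f g : (Fin n → E) × (Fin n → E) → ℝ)
    (hf : Measurable f) (hg : Measurable g)
    (hfj : ∀ (x x' : Fin n → E) (v : E), f (x, x') = f (x, Function.update x' j v))
    (hgj : ∀ (x x' : Fin n → E), ∫ v, g (Function.update x j v, x') ∂(ν j) = 0)
    (hint1 : Integrable (fun p => f p * g p) ((Measure.pi ν).prod (Measure.pi ν)))
    (hint2 : Integrable (fun p => f (Function.update p.1 j (p.2 j), p.2) * g p)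
      ((Measure.pi ν).prod (Measure.pi ν))) :
    ∫ p, f p * g p ∂((Measure.pi ν).prod (Measure.pi ν)) =
      ∫ p, (f p - f (Function.update p.1 j (p.2 j), p.2)) * g p
        ∂((Measure.pi ν).prod (Measure.pi ν)) :=
  stmt9_general n ν j f g hgj hint1 hint2
end

section
/- Let X and W be random vectors (possibly dependent) and Y a random vector such that for a class of thrice-differentiable functions h: ℝ^p → ℝ with M₂(h) = sup_z ∑_{r,s}|∂_r∂_s h(z)| ≤ Cβ² and M₃(h) = sup_z ∑_{r,s,u}|∂_r∂_s∂_u h(z)| ≤ Cβ³, one has |E h(W) − E h(Y)| ≤ A·β² + B·β³ for constants A, B. If additionally Y satisfies the Gaussian anti-concentration property sup_z P(|max_r Y_r − z| ≤ ε) ≤ Cε√(log p) for all ε > 0, and for each t there is h_β with 1{max_r z_r ≤ t} ≤ h_β(z) ≤ 1{max_r z_r ≤ t + (log p + 1)/β}, then sup_t |P(max_r W_r ≤ t) − P(max_r Y_r ≤ t)| ≤ C'(Aβ² + Bβ³ + (log p + 1)√(log p)/β) for a constant C'. -/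
/-!
Smooth the indicator of `{max ≤ t}` by `h_β`, which lies between the indicators at levels `t`
and `t + δ`, `δ = (log p + 1)/β`. Integrating the sandwich against the laws of `W` and `Y` and
using the smooth comparison gives `P(max W ≤ t) ≤ P(max Y ≤ t + δ) + Aβ² + Bβ³`, and the same with
`W` and `Y` exchanged at level `t - δ`. Anti-concentration of `max Y` moves the level back to `t`
at a cost `C δ √(log p)`.
-/

open MeasureTheory Real

/-- Second partial derivative `∂_r ∂_s h` at `z`. -/
noncomputable def d2 {p : ℕ} (h : (Fin p → ℝ) → ℝ) (z : Fin p → ℝ) (r s : Fin p) : ℝ :=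
  fderiv ℝ (fun y => fderiv ℝ h y (Pi.single s 1)) z (Pi.single r 1)

/-- Third partial derivative `∂_u ∂_s ∂_r h` at `z`. -/
noncomputable def d3 {p : ℕ} (h : (Fin p → ℝ) → ℝ) (z : Fin p → ℝ) (r s u : Fin p) : ℝ :=
  fderiv ℝ (fun y => d2 h y r s) z (Pi.single u 1)

noncomputable def maxCoord {p : ℕ} [NeZero p] (v : Fin p → ℝ) : ℝ :=
  Finset.univ.sup' Finset.univ_nonempty v

theorem measurable_maxCoord {p : ℕ} [NeZero p] : Measurable (maxCoord : (Fin p → ℝ) → ℝ) := by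
  unfold maxCoord
  fun_prop

section Smoothing

variable {Ω E : Type*} [MeasurableSpace Ω] [MeasurableSpace E] {μ : Measure Ω}

theorem integral_indicator_one_comp {X : Ω → E} (hX : Measurable X) {S : Set E}
    (hS : MeasurableSet S) : ∫ ω, S.indicator 1 (X ω) ∂μ = μ.real (X ⁻¹' S) := by
  simp_rw [← Set.indicator_comp_right, Pi.one_comp]
  exact integral_indicator_one (hX hS)

variable [IsFiniteMeasure μ]

theorem measureReal_le_integral_le_of_indicator_le {X : Ω → E} (hX : Measurable X)
    {S T : Set E} (hS : MeasurableSet S) (hT : MeasurableSet T) {h : E → ℝ}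
    (hh : Measurable h) (hSh : ∀ x, S.indicator 1 x ≤ h x) (hhT : ∀ x, h x ≤ T.indicator 1 x) :
    μ.real (X ⁻¹' S) ≤ ∫ ω, h (X ω) ∂μ ∧ ∫ ω, h (X ω) ∂μ ≤ μ.real (X ⁻¹' T) := by
  have indicator_nonneg (U : Set E) (x : E) : 0 ≤ U.indicator (1 : E → ℝ) x :=
    Set.indicator_nonneg (fun _ _ => zero_le_one) x
  have h_nonneg (x : E) : 0 ≤ h x := (indicator_nonneg S x).trans (hSh x)
  have h_integrable : Integrable (fun ω => h (X ω)) μ := by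
    refine (integrable_const (1 : ℝ)).mono' (hh.comp hX).aestronglyMeasurable (ae_of_all _ ?_)
    intro ω
    rw [Real.norm_of_nonneg (h_nonneg _)]
    exact (hhT _).trans (Set.indicator_le_self' (fun _ _ => zero_le_one) _)
  constructor
  · rw [← integral_indicator_one_comp hX hS]
    exact integral_mono_of_nonneg (ae_of_all _ fun _ => indicator_nonneg S _) h_integrable
      (ae_of_all _ fun _ => hSh _)
  · rw [← integral_indicator_one_comp hX hT]
    exact integral_mono_of_nonneg (ae_of_all _ fun _ => h_nonneg _)
      ((integrable_const 1).indicator (hX hT)) (ae_of_all _ fun _ => hhT _)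

theorem measureReal_le_add_of_smoothing {W Y : Ω → E} (hW : Measurable W) (hY : Measurable Y)
    {T : E → ℝ} (hT : Measurable T) {t δ ε : ℝ} {h : E → ℝ} (hh : Measurable h)
    (hlo : ∀ x, {x | T x ≤ t}.indicator 1 x ≤ h x)
    (hhi : ∀ x, h x ≤ {x | T x ≤ t + δ}.indicator 1 x)
    (hWY : |(∫ ω, h (W ω) ∂μ) - ∫ ω, h (Y ω) ∂μ| ≤ ε) :
    μ.real {ω | T (W ω) ≤ t} ≤ μ.real {ω | T (Y ω) ≤ t + δ} + ε := by
  have hS : MeasurableSet {x | T x ≤ t} := measurableSet_le hT measurable_const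
  have hS' : MeasurableSet {x | T x ≤ t + δ} := measurableSet_le hT measurable_const
  have hW' := measureReal_le_integral_le_of_indicator_le (μ := μ) hW hS hS' hh hlo hhi
  have hY' := measureReal_le_integral_le_of_indicator_le (μ := μ) hY hS hS' hh hlo hhi
  simp only [Set.preimage_ofPred_eq] at hW' hY'
  linarith [hW'.1, hY'.2, (abs_le.1 hWY).2]

theorem measureReal_le_add_of_anticoncentration {Z : Ω → ℝ} {L δ : ℝ} (hL : 0 ≤ L)
    (hδ : 0 < δ) (hanti : ∀ z ε : ℝ, 0 < ε → μ {ω | |Z ω - z| ≤ ε} ≤ ENNReal.ofReal (L * ε))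
    (t : ℝ) : μ.real {ω | Z ω ≤ t + δ} ≤ μ.real {ω | Z ω ≤ t} + L * δ := by
  have hsub : {ω | Z ω ≤ t + δ} ⊆ {ω | Z ω ≤ t} ∪ {ω | |Z ω - t| ≤ δ} := by
    rintro ω (hω : Z ω ≤ t + δ)
    rcases le_or_gt (Z ω) t with hZ | hZ
    · exact Or.inl hZ
    · exact Or.inr (show |Z ω - t| ≤ δ from abs_le.2 ⟨by linarith, by linarith⟩)
  calc μ.real {ω | Z ω ≤ t + δ}
      ≤ μ.real ({ω | Z ω ≤ t} ∪ {ω | |Z ω - t| ≤ δ}) := measureReal_mono hsub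
    _ ≤ μ.real {ω | Z ω ≤ t} + μ.real {ω | |Z ω - t| ≤ δ} := measureReal_union_le _ _
    _ ≤ μ.real {ω | Z ω ≤ t} + L * δ := by
      gcongr
      exact ENNReal.toReal_le_of_le_ofReal (by positivity) (hanti t δ hδ)

theorem abs_measureReal_sub_le_of_smoothing {W Y : Ω → E} (hW : Measurable W)
    (hY : Measurable Y) {T : E → ℝ} (hT : Measurable T) {δ ε L : ℝ} (hδ : 0 < δ) (hL : 0 ≤ L)
    (hanti : ∀ z η : ℝ, 0 < η → μ {ω | |T (Y ω) - z| ≤ η} ≤ ENNReal.ofReal (L * η))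
    (hsmooth : ∀ t, ∃ h : E → ℝ, Measurable h ∧ (∀ x, {x | T x ≤ t}.indicator 1 x ≤ h x) ∧
      (∀ x, h x ≤ {x | T x ≤ t + δ}.indicator 1 x) ∧
      |(∫ ω, h (W ω) ∂μ) - ∫ ω, h (Y ω) ∂μ| ≤ ε) (t : ℝ) :
    |μ.real {ω | T (W ω) ≤ t} - μ.real {ω | T (Y ω) ≤ t}| ≤ ε + L * δ := by
  obtain ⟨h₁, hh₁, hlo₁, hhi₁, hWY₁⟩ := hsmooth t
  obtain ⟨h₂, hh₂, hlo₂, hhi₂, hWY₂⟩ := hsmooth (t - δ)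
  have upper := measureReal_le_add_of_smoothing hW hY hT hh₁ hlo₁ hhi₁ hWY₁
  have lower := measureReal_le_add_of_smoothing hY hW hT hh₂ hlo₂ hhi₂
    ((abs_sub_comm _ _).trans_le hWY₂)
  have anti_upper := measureReal_le_add_of_anticoncentration hL hδ hanti t
  have anti_lower := measureReal_le_add_of_anticoncentration hL hδ hanti (t - δ)
  rw [sub_add_cancel] at lower anti_lower
  rw [abs_le]
  constructor <;> linarith

end Smoothing

theorem stmt16_general {Ω : Type*} [MeasurableSpace Ω] (μ : Measure Ω) [IsProbabilityMeasure μ]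
    {p : ℕ} [NeZero p]
    (W Y : Ω → Fin p → ℝ) (hW : Measurable W) (hY : Measurable Y)
    (A B C β : ℝ) (hC : 0 < C) (hβ : 0 < β)
    (hsmooth : ∀ h : (Fin p → ℝ) → ℝ, ContDiff ℝ 3 h →
      (∀ z, ∑ r, ∑ s, |d2 h z r s| ≤ C * β ^ 2) →
      (∀ z, ∑ r, ∑ s, ∑ u, |d3 h z r s u| ≤ C * β ^ 3) →
      |(∫ ω, h (W ω) ∂μ) - ∫ ω, h (Y ω) ∂μ| ≤ A * β ^ 2 + B * β ^ 3)
    (hanti : ∀ z ε : ℝ, 0 < ε →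
      μ {ω | |maxCoord (Y ω) - z| ≤ ε} ≤ ENNReal.ofReal (C * ε * Real.sqrt (Real.log p)))
    (hsandwich : ∀ t : ℝ, ∃ h : (Fin p → ℝ) → ℝ, ContDiff ℝ 3 h ∧
      (∀ z, ∑ r, ∑ s, |d2 h z r s| ≤ C * β ^ 2) ∧
      (∀ z, ∑ r, ∑ s, ∑ u, |d3 h z r s u| ≤ C * β ^ 3) ∧
      (∀ z : Fin p → ℝ,
        Set.indicator {y : Fin p → ℝ | maxCoord y ≤ t} (fun _ => (1 : ℝ)) z ≤ h z) ∧
      (∀ z : Fin p → ℝ,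
        h z ≤ Set.indicator {y : Fin p → ℝ | maxCoord y ≤ t + (Real.log p + 1) / β}
          (fun _ => (1 : ℝ)) z)) :
    ∃ C' : ℝ, 0 < C' ∧ ∀ t : ℝ,
      |(μ {ω | maxCoord (W ω) ≤ t}).toReal - (μ {ω | maxCoord (Y ω) ≤ t}).toReal| ≤
        C' * (A * β ^ 2 + B * β ^ 3 + (Real.log p + 1) * Real.sqrt (Real.log p) / β) := by
  have hδ : 0 < (Real.log p + 1) / β := by
    have := Real.log_natCast_nonneg p
    positivity
  have hL : 0 ≤ C * Real.sqrt (Real.log p) := by positivity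
  have hE : 0 ≤ A * β ^ 2 + B * β ^ 3 := by
    obtain ⟨h, hh, hd2, hd3, -⟩ := hsandwich 0
    exact (abs_nonneg _).trans (hsmooth h hh hd2 hd3)
  have hkol := abs_measureReal_sub_le_of_smoothing hW hY measurable_maxCoord hδ hL
    (fun z η hη => (hanti z η hη).trans_eq (by ring_nf))
    (fun t => by
      obtain ⟨h, hh, hd2, hd3, hlo, hhi⟩ := hsandwich t
      exact ⟨h, hh.continuous.measurable, hlo, hhi, hsmooth h hh hd2 hd3⟩)
  refine ⟨C + 1, by linarith, fun t => (hkol t).trans ?_⟩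
  have hδL : 0 ≤ (Real.log p + 1) * Real.sqrt (Real.log p) / β := by positivity
  calc A * β ^ 2 + B * β ^ 3 + C * Real.sqrt (Real.log p) * ((Real.log p + 1) / β)
      = A * β ^ 2 + B * β ^ 3 + C * ((Real.log p + 1) * Real.sqrt (Real.log p) / β) := by ring
    _ ≤ (C + 1) * (A * β ^ 2 + B * β ^ 3 + (Real.log p + 1) * Real.sqrt (Real.log p) / β) := by
      nlinarith

/-- From smooth-function comparison plus Gaussian anti-concentration of maxima and
the existence of smoothing functions sandwiching the indicator of the max, deduce a
Kolmogorov-distance bound on the distributions of the maxima. -/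
theorem stmt16 {Ω : Type*} [MeasurableSpace Ω] (μ : Measure Ω) [IsProbabilityMeasure μ]
    {p : ℕ} [NeZero p] (hp : 2 ≤ p)
    (W Y : Ω → Fin p → ℝ) (hW : Measurable W) (hY : Measurable Y)
    (A B C β : ℝ) (hA : 0 ≤ A) (hB : 0 ≤ B) (hC : 0 < C) (hβ : 0 < β)
    (hsmooth : ∀ h : (Fin p → ℝ) → ℝ, ContDiff ℝ 3 h →
      (∀ z, ∑ r, ∑ s, |d2 h z r s| ≤ C * β ^ 2) →
      (∀ z, ∑ r, ∑ s, ∑ u, |d3 h z r s u| ≤ C * β ^ 3) →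
      |(∫ ω, h (W ω) ∂μ) - ∫ ω, h (Y ω) ∂μ| ≤ A * β ^ 2 + B * β ^ 3)
    (hanti : ∀ z ε : ℝ, 0 < ε →
      μ {ω | |maxCoord (Y ω) - z| ≤ ε} ≤ ENNReal.ofReal (C * ε * Real.sqrt (Real.log p)))
    (hsandwich : ∀ t : ℝ, ∃ h : (Fin p → ℝ) → ℝ, ContDiff ℝ 3 h ∧
      (∀ z, ∑ r, ∑ s, |d2 h z r s| ≤ C * β ^ 2) ∧
      (∀ z, ∑ r, ∑ s, ∑ u, |d3 h z r s u| ≤ C * β ^ 3) ∧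
      (∀ z : Fin p → ℝ,
        Set.indicator {y : Fin p → ℝ | maxCoord y ≤ t} (fun _ => (1 : ℝ)) z ≤ h z) ∧
      (∀ z : Fin p → ℝ,
        h z ≤ Set.indicator {y : Fin p → ℝ | maxCoord y ≤ t + (Real.log p + 1) / β}
          (fun _ => (1 : ℝ)) z)) :
    ∃ C' : ℝ, 0 < C' ∧ ∀ t : ℝ,
      |(μ {ω | maxCoord (W ω) ≤ t}).toReal - (μ {ω | maxCoord (Y ω) ≤ t}).toReal| ≤
        C' * (A * β ^ 2 + B * β ^ 3 + (Real.log p + 1) * Real.sqrt (Real.log p) / β) :=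
  stmt16_general μ W Y hW hY A B C β hC hβ hsmooth hanti hsandwich
end
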